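/- arXiv:1102.0848 — 4 statements merged into one kernel-verified Lean document; each statement's English description precedes it below -/
import Mathlib

section
/- Every compact semitopological semigroup contains an idempotent element. -/
/-- Every compact (Hausdorff) semitopological semigroup contains an idempotent:
if `S` is a nonempty compact Hausdorff space with a semigroup structure for which all
left and right translations are continuous, then there is `e ∈ S` with `e * e = e`. -/
theorem compact_semitopological_semigroup_has_idempotent
    {S : Type*} [Semigroup S] [TopologicalSpace S] [CompactSpace S] [T2Space S]
    [Nonempty S]
    (hleft : ∀ s : S, Continuous fun x : S => s * x)
    (hright : ∀ s : S, Continuous fun x : S => x * s) :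
    ∃ e : S, e * e = e := by
  -- family of nonempty closed subsemigroups
  set 𝒮 : Set (Set S) := {A | A.Nonempty ∧ IsClosed A ∧ ∀ x ∈ A, ∀ y ∈ A, x * y ∈ A} with h𝒮
  have huniv : (Set.univ : Set S) ∈ 𝒮 :=
    ⟨Set.univ_nonempty, isClosed_univ, fun _ _ _ _ => trivial⟩
  have hchainH : ∀ c ⊆ 𝒮, IsChain (· ⊆ ·) c → c.Nonempty →
      ∃ lb ∈ 𝒮, ∀ s ∈ c, lb ⊆ s := by
    intro c hc hchain hcne
    refine ⟨⋂₀ c, ⟨?_, ?_, ?_⟩, fun s hs => Set.sInter_subset_of_mem hs⟩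
    · haveI : Nonempty c := hcne.to_subtype
      refine IsCompact.nonempty_sInter_of_directed_nonempty_isCompact_isClosed ?_
        (fun U hU => (hc hU).1) (fun U hU => (hc hU).2.1.isCompact)
        (fun U hU => (hc hU).2.1)
      intro U hU V hV
      rcases hchain.total hU hV with h | h
      · exact ⟨U, hU, le_refl _, h⟩
      · exact ⟨V, hV, h, le_refl _⟩
    · exact isClosed_sInter fun U hU => (hc hU).2.1
    · intro x hx y hy
      exact fun U hU => (hc hU).2.2 x (hx U hU) y (hy U hU)
  obtain ⟨A, -, hA, hAmin⟩ := zorn_superset_nonempty 𝒮 hchainH Set.univ huniv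
  obtain ⟨hAne, hAcl, hAmul⟩ := hA
  obtain ⟨s, hs⟩ := hAne
  -- A * s is a nonempty closed subsemigroup contained in A, so equals A
  have hAs : (fun x : S => x * s) '' A ∈ 𝒮 := by
    refine ⟨⟨s * s, s, hs, rfl⟩, ?_, ?_⟩
    · exact (hAcl.isCompact.image (hright s)).isClosed
    · rintro x ⟨a, ha, rfl⟩ y ⟨b, hb, rfl⟩
      exact ⟨a * s * b, hAmul _ (hAmul a ha s hs) b hb, by simp [mul_assoc]⟩
  have hsubAs : (fun x : S => x * s) '' A ⊆ A := by
    rintro x ⟨a, ha, rfl⟩; exact hAmul a ha s hs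
  have hAeq : (fun x : S => x * s) '' A = A := subset_antisymm hsubAs (hAmin hAs hsubAs)
  -- B = {x ∈ A | x * s = s} is a nonempty closed subsemigroup
  have hsmem : s ∈ (fun x : S => x * s) '' A := by rw [hAeq]; exact hs
  obtain ⟨t, ht, hts⟩ := hsmem
  have hB : {x ∈ A | x * s = s} ∈ 𝒮 := by
    refine ⟨⟨t, ht, hts⟩, ?_, ?_⟩
    · exact hAcl.inter (isClosed_singleton.preimage (hright s))
    · rintro x ⟨hxA, hxs⟩ y ⟨hyA, hys⟩
      exact ⟨hAmul x hxA y hyA, by rw [mul_assoc, hys, hxs]⟩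
  have hBsub : A ⊆ {x ∈ A | x * s = s} := hAmin hB (fun x hx => hx.1)
  have : s ∈ {x ∈ A | x * s = s} := hBsub hs
  exact ⟨s, this.2⟩
end

section
/- Let (X, μ) be a probability space, T a measure-preserving invertible transformation of X, and η a self-joining of T, i.e., a T×T-invariant probability measure on X×X with both marginals μ. Let Φ_η be the associated Markov operator on L²(X,μ), determined by ⟨Φ_η f, g⟩_{L²(μ)} = ∫ f(x)·conj(g(y)) dη(x,y). Then for f ∈ L²(X,μ): there exists g ∈ L²(X,μ) with f(x) = g(y) for η-a.e. (x,y) if and only if ‖Φ_η f‖ = ‖f‖. -/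
open MeasureTheory
open scoped InnerProductSpace

/-!
Pulling back along the two coordinate projections gives linear isometries
`U, V : L²(μ) → L²(η)`, and the defining identity of `Φ` says `Φ = V† U`. For an isometry `V`,
`‖y - V (V† y)‖² = ‖y‖² - ‖V† y‖²`, so `y` lies in the range of `V` exactly when `‖V† y‖ = ‖y‖`.
Apply this to `y = U f`, whose norm is `‖f‖`: the range of `V` consists of the functions of the
second coordinate.
-/

namespace LinearIsometry

variable {𝕜 E F : Type*} [RCLike 𝕜] [NormedAddCommGroup E] [InnerProductSpace 𝕜 E]
  [NormedAddCommGroup F] [InnerProductSpace 𝕜 F] {V : E →ₗᵢ[𝕜] F} {x : E} {y : F}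

theorem norm_sub_map_sq_of_forall_inner (hx : ∀ g, ⟪g, x⟫_𝕜 = ⟪V g, y⟫_𝕜) :
    ‖y - V x‖ ^ 2 = ‖y‖ ^ 2 - ‖x‖ ^ 2 := by
  have hre : RCLike.re ⟪y, V x⟫_𝕜 = ‖x‖ ^ 2 := by
    rw [← inner_conj_symm, ← hx, RCLike.conj_re, inner_self_eq_norm_sq]
  rw [norm_sub_sq (𝕜 := 𝕜), hre, V.norm_map]
  ring

theorem exists_eq_map_iff_norm_eq (hx : ∀ g, ⟪g, x⟫_𝕜 = ⟪V g, y⟫_𝕜) :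
    (∃ g, y = V g) ↔ ‖x‖ = ‖y‖ := by
  constructor
  · rintro ⟨g, rfl⟩
    have hxg : x = g := ext_inner_left 𝕜 fun h => by rw [hx, V.inner_map_map]
    rw [hxg, V.norm_map]
  · intro hnorm
    refine ⟨x, ?_⟩
    have hsq : ‖y - V x‖ ^ 2 = 0 := by rw [norm_sub_map_sq_of_forall_inner hx, hnorm, sub_self]
    exact sub_eq_zero.mp (norm_eq_zero.mp (pow_eq_zero_iff two_ne_zero |>.mp hsq))

end LinearIsometry

namespace MeasureTheory.Lp

variable {X Y E : Type*} [MeasurableSpace X] [MeasurableSpace Y] {μ : Measure X} {ν : Measure Y}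
  {π π' : Y → X}

theorem compMeasurePreserving_eq_iff [NormedAddCommGroup E] {p : ENNReal} (f g : Lp E p μ)
    (hπ : MeasurePreserving π ν μ) (hπ' : MeasurePreserving π' ν μ) :
    compMeasurePreserving π hπ f = compMeasurePreserving π' hπ' g ↔ f ∘ π =ᵐ[ν] g ∘ π' := by
  rw [Lp.ext_iff]
  have hf := coeFn_compMeasurePreserving f hπ
  have hg := coeFn_compMeasurePreserving g hπ'
  exact ⟨fun h => hf.symm.trans (h.trans hg), fun h => hf.trans (h.trans hg.symm)⟩

theorem inner_compMeasurePreserving {𝕜 : Type*} [RCLike 𝕜] [NormedAddCommGroup E]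
    [InnerProductSpace 𝕜 E] (f g : Lp E 2 μ)
    (hπ : MeasurePreserving π ν μ) (hπ' : MeasurePreserving π' ν μ) :
    ⟪compMeasurePreserving π hπ f, compMeasurePreserving π' hπ' g⟫_𝕜 =
      ∫ y, ⟪f (π y), g (π' y)⟫_𝕜 ∂ν := by
  rw [L2.inner_def]
  refine integral_congr_ae ?_
  filter_upwards [coeFn_compMeasurePreserving f hπ, coeFn_compMeasurePreserving g hπ'] with y h h'
  rw [h, h', Function.comp_apply, Function.comp_apply]

end MeasureTheory.Lp

theorem joining_markov_operator_isometry_iff_general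
    {X : Type*} [MeasurableSpace X] (μ : Measure X)
    (η : Measure (X × X))
    (hmarg₁ : η.map Prod.fst = μ) (hmarg₂ : η.map Prod.snd = μ)
    (Φ : Lp ℂ 2 μ →L[ℂ] Lp ℂ 2 μ)
    (hΦ : ∀ f g : Lp ℂ 2 μ,
      ∫ y, (Φ f : X → ℂ) y * (starRingEnd ℂ) ((g : X → ℂ) y) ∂μ =
        ∫ p : X × X, (f : X → ℂ) p.1 * (starRingEnd ℂ) ((g : X → ℂ) p.2) ∂η)
    (f : Lp ℂ 2 μ) :
    (∃ g : Lp ℂ 2 μ, ∀ᵐ p : X × X ∂η, (f : X → ℂ) p.1 = (g : X → ℂ) p.2) ↔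
      ‖Φ f‖ = ‖f‖ := by
  have h₁ : MeasurePreserving Prod.fst η μ := ⟨measurable_fst, hmarg₁⟩
  have h₂ : MeasurePreserving Prod.snd η μ := ⟨measurable_snd, hmarg₂⟩
  let U := Lp.compMeasurePreservingₗᵢ (E := ℂ) (p := 2) ℂ Prod.fst h₁
  let V := Lp.compMeasurePreservingₗᵢ (E := ℂ) (p := 2) ℂ Prod.snd h₂
  have hadj : ∀ g, ⟪g, Φ f⟫_ℂ =
      ⟪Lp.compMeasurePreserving Prod.snd h₂ g, Lp.compMeasurePreserving Prod.fst h₁ f⟫_ℂ := by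
    intro g
    rw [Lp.inner_compMeasurePreserving, L2.inner_def]
    simpa only [RCLike.inner_apply, mul_comm] using hΦ f g
  rw [← U.norm_map f, ← LinearIsometry.exists_eq_map_iff_norm_eq (V := V) (y := U f) hadj]
  exact exists_congr fun g => (Lp.compMeasurePreserving_eq_iff f g h₁ h₂).symm

/-- Let `η` be a self-joining of an invertible measure-preserving transformation `T` of a
probability space `(X, μ)` and let `Φ` be the associated Markov operator on `L²(μ)`,
characterized by `∫ Φf(y) conj(g(y)) dμ(y) = ∫∫ f(x) conj(g(y)) dη(x,y)`.  Then, for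
`f ∈ L²(μ)`, `f(x)` coincides `η`-a.e. with a function of the second coordinate if and only if
`‖Φ f‖ = ‖f‖`. -/
theorem joining_markov_operator_isometry_iff
    {X : Type*} [MeasurableSpace X] (μ : Measure X) [IsProbabilityMeasure μ]
    (T Tinv : X → X) (hT : MeasurePreserving T μ μ) (hTinv : MeasurePreserving Tinv μ μ)
    (hinv₁ : ∀ x, Tinv (T x) = x) (hinv₂ : ∀ x, T (Tinv x) = x)
    (η : Measure (X × X)) [IsProbabilityMeasure η]
    (hη : η.map (Prod.map T T) = η)
    (hmarg₁ : η.map Prod.fst = μ) (hmarg₂ : η.map Prod.snd = μ)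
    (Φ : Lp ℂ 2 μ →L[ℂ] Lp ℂ 2 μ)
    (hΦ : ∀ f g : Lp ℂ 2 μ,
      ∫ y, (Φ f : X → ℂ) y * (starRingEnd ℂ) ((g : X → ℂ) y) ∂μ =
        ∫ p : X × X, (f : X → ℂ) p.1 * (starRingEnd ℂ) ((g : X → ℂ) p.2) ∂η)
    (f : Lp ℂ 2 μ) :
    (∃ g : Lp ℂ 2 μ, ∀ᵐ p : X × X ∂η, (f : X → ℂ) p.1 = (g : X → ℂ) p.2) ↔
      ‖Φ f‖ = ‖f‖ :=
  joining_markov_operator_isometry_iff_general μ η hmarg₁ hmarg₂ Φ hΦ f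
end

section
/- Let η be a self-joining of a measure-preserving transformation T of (X,μ), Φ_η its Markov operator, and 𝔄 a T-invariant sub-σ-algebra of 𝔅. Then Φ_η f = f for every f ∈ L²(𝔄) if and only if the restriction of η to 𝔄⊗𝔄 equals the diagonal measure Δ_𝔄 given by Δ_𝔄(A₁×A₂) = μ(A₁ ∩ A₂) for A₁, A₂ ∈ 𝔄. -/
/-!
Since η has marginals μ, `∫ f(x) ḡ(y) dη` is the inner product of `g ∘ snd` and `f ∘ fst` in
`L²(η)`, so `Φ_η` is a contraction. If `Φ_η` fixes `1_A` for `A ∈ 𝔄`, testing against `1_B` gives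
`η(A × B) = μ(A ∩ B)`. Conversely, if η is diagonal on `𝔄 ⊗ 𝔄`, then `⟪f, Φ_η f⟫ = ‖f‖²` for
`𝔄`-measurable `f`, and for a contraction this forces `‖Φ_η f - f‖² = ‖Φ_η f‖² - ‖f‖² ≤ 0`.
-/

open MeasureTheory ComplexConjugate
open scoped InnerProductSpace

theorem MeasurableSpace.prod_mono {α β : Type*} {m₁ m₂ : MeasurableSpace α}
    {n₁ n₂ : MeasurableSpace β} (hm : m₁ ≤ m₂) (hn : n₁ ≤ n₂) : m₁.prod n₁ ≤ m₂.prod n₂ :=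
  sup_le_sup (comap_mono hm) (comap_mono hn)

theorem eq_of_norm_le_of_re_inner_eq {𝕜 E : Type*} [RCLike 𝕜] [NormedAddCommGroup E]
    [InnerProductSpace 𝕜 E] {x y : E} (hle : ‖x‖ ≤ ‖y‖) (hre : RCLike.re ⟪y, x⟫_𝕜 = ‖y‖ ^ 2) :
    x = y := by
  have hsq : ‖x - y‖ ^ 2 ≤ 0 := by
    rw [norm_sub_sq (𝕜 := 𝕜), ← inner_re_symm, hre]
    nlinarith [norm_nonneg x]
  rw [← sub_eq_zero, ← norm_eq_zero]
  exact pow_eq_zero_iff two_ne_zero |>.1 (le_antisymm hsq (sq_nonneg _))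

theorem MeasureTheory.L2.integral_mul_conj_eq_inner {α : Type*} [MeasurableSpace α]
    {ν : Measure α} (f g : Lp ℂ 2 ν) : ∫ x, f x * conj (g x) ∂ν = ⟪g, f⟫_ℂ := by
  simp only [L2.inner_def, RCLike.inner_apply]

theorem integral_mul_conj_eq_measureReal_inter {α : Type*} [MeasurableSpace α] (ν : Measure α)
    {A B : Set α} (hA : MeasurableSet A) (hB : MeasurableSet B) {f g : α → ℂ}
    (hf : f =ᵐ[ν] A.indicator fun _ => 1) (hg : g =ᵐ[ν] B.indicator fun _ => 1) :
    ∫ x, f x * conj (g x) ∂ν = ν.real (A ∩ B) := by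
  have hfg : (fun x => f x * conj (g x)) =ᵐ[ν] (A ∩ B).indicator fun _ => 1 := by
    filter_upwards [hf, hg] with x hfx hgx
    by_cases hxA : x ∈ A <;> by_cases hxB : x ∈ B <;> simp [hfx, hgx, hxA, hxB]
  rw [integral_congr_ae hfg, integral_indicator_const _ (hA.inter hB), Complex.real_smul,
    mul_one]

section Joining

variable {X : Type*} [MeasurableSpace X] {μ : Measure X} {η : Measure (X × X)}
  (h₁ : MeasurePreserving Prod.fst η μ) (h₂ : MeasurePreserving Prod.snd η μ)
include h₁ h₂

theorem integral_fst_mul_conj_snd_eq_inner (f g : Lp ℂ 2 μ) :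
    ∫ p, f p.1 * conj (g p.2) ∂η =
      ⟪Lp.compMeasurePreserving Prod.snd h₂ g, Lp.compMeasurePreserving Prod.fst h₁ f⟫_ℂ := by
  rw [← L2.integral_mul_conj_eq_inner]
  refine integral_congr_ae ?_
  filter_upwards [Lp.coeFn_compMeasurePreserving f h₁, Lp.coeFn_compMeasurePreserving g h₂]
    with p hf hg
  rw [hf, hg, Function.comp_apply, Function.comp_apply]

theorem norm_integral_fst_mul_conj_snd_le (f g : Lp ℂ 2 μ) :
    ‖∫ p, f p.1 * conj (g p.2) ∂η‖ ≤ ‖f‖ * ‖g‖ := by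
  rw [integral_fst_mul_conj_snd_eq_inner h₁ h₂, mul_comm]
  refine (norm_inner_le_norm _ _).trans_eq ?_
  rw [Lp.norm_compMeasurePreserving, Lp.norm_compMeasurePreserving]

theorem norm_apply_le_of_integral_eq {Φ : Lp ℂ 2 μ → Lp ℂ 2 μ}
    (hΦ : ∀ f g : Lp ℂ 2 μ, ∫ y, Φ f y * conj (g y) ∂μ = ∫ p, f p.1 * conj (g p.2) ∂η)
    (f : Lp ℂ 2 μ) : ‖Φ f‖ ≤ ‖f‖ := by
  have h : ‖Φ f‖ ^ 2 ≤ ‖f‖ * ‖Φ f‖ :=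
    calc ‖Φ f‖ ^ 2 = ‖⟪Φ f, Φ f⟫_ℂ‖ := by simp [inner_self_eq_norm_sq_to_K]
      _ = ‖∫ p, f p.1 * conj (Φ f p.2) ∂η‖ := by rw [← hΦ, L2.integral_mul_conj_eq_inner]
      _ ≤ ‖f‖ * ‖Φ f‖ := norm_integral_fst_mul_conj_snd_le h₁ h₂ f (Φ f)
  nlinarith [norm_nonneg (Φ f), norm_nonneg f]

theorem integral_fst_mul_conj_snd_eq_measureReal_prod {A B : Set X} (hA : MeasurableSet A)
    (hB : MeasurableSet B) {f g : X → ℂ} (hf : f =ᵐ[μ] A.indicator fun _ => 1)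
    (hg : g =ᵐ[μ] B.indicator fun _ => 1) :
    ∫ p, f p.1 * conj (g p.2) ∂η = η.real (A ×ˢ B) := by
  rw [Set.prod_eq]
  exact integral_mul_conj_eq_measureReal_inter η (measurable_fst hA) (measurable_snd hB)
    (h₁.quasiMeasurePreserving.ae_eq_comp hf) (h₂.quasiMeasurePreserving.ae_eq_comp hg)

end Joining

section Diagonal

variable {X : Type*} {m : MeasurableSpace X} [m₀ : MeasurableSpace X]
  {μ : Measure X} {η : Measure (X × X)}

theorem trim_eq_trim_map_diag_of_forall_prod [IsFiniteMeasure η] (hm : m ≤ m₀)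
    (hD : ∀ A B, MeasurableSet[m] A → MeasurableSet[m] B → η (A ×ˢ B) = μ (A ∩ B)) :
    η.trim (MeasurableSpace.prod_mono hm hm) =
      (μ.map fun x => (x, x)).trim (MeasurableSpace.prod_mono hm hm) := by
  have hdiag : Measurable fun x : X => (x, x) := measurable_id.prodMk measurable_id
  have hrect : ∀ A B, MeasurableSet[m] A → MeasurableSet[m] B →
      η.trim (MeasurableSpace.prod_mono hm hm) (A ×ˢ B) =
        (μ.map fun x => (x, x)).trim (MeasurableSpace.prod_mono hm hm) (A ×ˢ B) := by
    intro A B hA hB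
    have hAB : MeasurableSet[m.prod m] (A ×ˢ B) := @MeasurableSet.prod X X m m _ _ hA hB
    rw [trim_measurableSet_eq _ hAB, trim_measurableSet_eq _ hAB, hD A B hA hB,
      Measure.map_apply hdiag ((hm _ hA).prod (hm _ hB))]
    rfl
  refine ext_of_generate_finite _ (@generateFrom_prod X X m m).symm (@isPiSystem_prod X X m m) ?_ ?_
  · rintro _ ⟨A, hA, B, hB, rfl⟩
    exact hrect A B hA hB
  · simpa only [Set.univ_prod_univ] using hrect _ _ MeasurableSet.univ MeasurableSet.univ

theorem integral_eq_integral_diag_of_forall_prod [IsFiniteMeasure η] (hm : m ≤ m₀)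
    (hD : ∀ A B, MeasurableSet[m] A → MeasurableSet[m] B → η (A ×ˢ B) = μ (A ∩ B))
    {E : Type*} [NormedAddCommGroup E] [NormedSpace ℝ E] {F : X × X → E}
    (hF : StronglyMeasurable[m.prod m] F) : ∫ p, F p ∂η = ∫ x, F (x, x) ∂μ := by
  have hdiag : Measurable fun x : X => (x, x) := measurable_id.prodMk measurable_id
  have hmm := MeasurableSpace.prod_mono hm hm
  rw [integral_trim hmm hF, trim_eq_trim_map_diag_of_forall_prod hm hD, ← integral_trim hmm hF,
    integral_map hdiag.aemeasurable (hF.mono hmm).aestronglyMeasurable]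

theorem integral_fst_mul_conj_snd_self_eq_inner [IsFiniteMeasure η] (hm : m ≤ m₀)
    (h₁ : MeasurePreserving Prod.fst η μ) (h₂ : MeasurePreserving Prod.snd η μ)
    (hD : ∀ A B, MeasurableSet[m] A → MeasurableSet[m] B → η (A ×ˢ B) = μ (A ∩ B))
    {f : Lp ℂ 2 μ} (hf : AEStronglyMeasurable[m] f μ) :
    ∫ p, f p.1 * conj (f p.2) ∂η = ⟪f, f⟫_ℂ := by
  obtain ⟨f', hf'm, hff'⟩ := hf
  have hF : StronglyMeasurable[m.prod m] fun p : X × X => f' p.1 * conj (f' p.2) :=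
    (hf'm.comp_measurable measurable_fst).mul
      (RCLike.continuous_conj.comp_stronglyMeasurable (hf'm.comp_measurable measurable_snd))
  have hη : (fun p : X × X => f p.1 * conj (f p.2)) =ᵐ[η] fun p => f' p.1 * conj (f' p.2) := by
    filter_upwards [h₁.quasiMeasurePreserving.ae_eq_comp hff',
      h₂.quasiMeasurePreserving.ae_eq_comp hff'] with p hp₁ hp₂
    simp only [Function.comp_apply] at hp₁ hp₂
    rw [hp₁, hp₂]
  rw [integral_congr_ae hη, integral_eq_integral_diag_of_forall_prod hm hD hF,
    ← L2.integral_mul_conj_eq_inner]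
  refine integral_congr_ae ?_
  filter_upwards [hff'] with x hx
  rw [hx]

end Diagonal

theorem markov_fixes_factor_iff_diagonal_general
    {X : Type*} [m₀ : MeasurableSpace X] (μ : Measure X) [IsProbabilityMeasure μ]
    (η : Measure (X × X)) [IsProbabilityMeasure η]
    (hmarg₁ : η.map Prod.fst = μ) (hmarg₂ : η.map Prod.snd = μ)
    (Φ : Lp ℂ 2 μ →L[ℂ] Lp ℂ 2 μ)
    (hΦ : ∀ f g : Lp ℂ 2 μ,
      ∫ y, (Φ f : X → ℂ) y * (starRingEnd ℂ) ((g : X → ℂ) y) ∂μ =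
        ∫ p : X × X, (f : X → ℂ) p.1 * (starRingEnd ℂ) ((g : X → ℂ) p.2) ∂η)
    (m : MeasurableSpace X) (hm : m ≤ m₀) :
    (∀ f : Lp ℂ 2 μ, AEStronglyMeasurable[m] (f : X → ℂ) μ → Φ f = f) ↔
      ∀ A B : Set X, MeasurableSet[m] A → MeasurableSet[m] B →
        η (A ×ˢ B) = μ (A ∩ B) := by
  -- `m` comes later in the context, so it would otherwise be the instance found for `X`.
  let := m₀
  have h₁ : MeasurePreserving Prod.fst η μ := ⟨measurable_fst, hmarg₁⟩
  have h₂ : MeasurePreserving Prod.snd η μ := ⟨measurable_snd, hmarg₂⟩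
  constructor
  · intro hfix A B hA hB
    have key := hΦ (indicatorConstLp 2 (hm A hA) (measure_ne_top μ A) 1)
      (indicatorConstLp 2 (hm B hB) (measure_ne_top μ B) 1)
    rw [hfix _ (mem_lpMeas_indicatorConstLp (𝕜 := ℂ) hm hA _),
      integral_mul_conj_eq_measureReal_inter μ (hm A hA) (hm B hB) indicatorConstLp_coeFn
        indicatorConstLp_coeFn,
      integral_fst_mul_conj_snd_eq_measureReal_prod h₁ h₂ (hm A hA) (hm B hB)
        indicatorConstLp_coeFn indicatorConstLp_coeFn, Complex.ofReal_inj,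
      measureReal_eq_measureReal_iff] at key
    exact key.symm
  · intro hD f hf
    refine eq_of_norm_le_of_re_inner_eq (𝕜 := ℂ) (norm_apply_le_of_integral_eq h₁ h₂ hΦ f) ?_
    rw [← L2.integral_mul_conj_eq_inner, hΦ,
      integral_fst_mul_conj_snd_self_eq_inner hm h₁ h₂ hD hf, inner_self_eq_norm_sq]

/-- Let `η` be a self-joining of `T` with Markov operator `Φ`, and let `𝔄` (here `m`) be a
`T`-invariant sub-σ-algebra.  Then `Φ f = f` for every `f ∈ L²(𝔄)` if and only if the
restriction of `η` to `𝔄 ⊗ 𝔄` is the diagonal measure `Δ_𝔄`, i.e.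
`η(A₁ × A₂) = μ(A₁ ∩ A₂)` for all `A₁, A₂ ∈ 𝔄`. -/
theorem markov_fixes_factor_iff_diagonal
    {X : Type*} [m₀ : MeasurableSpace X] (μ : Measure X) [IsProbabilityMeasure μ]
    (T Tinv : X → X) (hT : MeasurePreserving T μ μ) (hTinv : MeasurePreserving Tinv μ μ)
    (hinv₁ : ∀ x, Tinv (T x) = x) (hinv₂ : ∀ x, T (Tinv x) = x)
    (η : Measure (X × X)) [IsProbabilityMeasure η]
    (hη : η.map (Prod.map T T) = η)
    (hmarg₁ : η.map Prod.fst = μ) (hmarg₂ : η.map Prod.snd = μ)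
    (Φ : Lp ℂ 2 μ →L[ℂ] Lp ℂ 2 μ)
    (hΦ : ∀ f g : Lp ℂ 2 μ,
      ∫ y, (Φ f : X → ℂ) y * (starRingEnd ℂ) ((g : X → ℂ) y) ∂μ =
        ∫ p : X × X, (f : X → ℂ) p.1 * (starRingEnd ℂ) ((g : X → ℂ) p.2) ∂η)
    (m : MeasurableSpace X) (hm : m ≤ m₀)
    (hminv : ∀ A : Set X, MeasurableSet[m] A → MeasurableSet[m] (T ⁻¹' A)) :
    (∀ f : Lp ℂ 2 μ, AEStronglyMeasurable[m] (f : X → ℂ) μ → Φ f = f) ↔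
      ∀ A B : Set X, MeasurableSet[m] A → MeasurableSet[m] B →
        η (A ×ˢ B) = μ (A ∩ B) :=
  markov_fixes_factor_iff_diagonal_general (m₀ := m₀) μ η hmarg₁ hmarg₂ Φ hΦ m hm
end

section
/- Let T be an ergodic invertible measure-preserving transformation of a probability space (X,μ), A an abelian Polish group (written multiplicatively), and φ, ψ : X → A measurable cocycles that are cohomologous, i.e., ψ(x) = φ(x)·f(x)·f(Tx)⁻¹ for a measurable f : X → A. If φ is recurrent then ψ is recurrent. -/
open MeasureTheory Filter Topology Pointwise

/-- The `n`-th iterate `φ⁽ⁿ⁾(x) = φ(x)·φ(Tx)·…·φ(Tⁿ⁻¹x)` of a cocycle. -/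
noncomputable def cocycleIterate {X A : Type*} [CommGroup A] (T : X → X) (φ : X → A)
    (n : ℕ) (x : X) : A :=
  ∏ i ∈ Finset.range n, φ (T^[i] x)

/-- A cocycle `φ : X → A` over `T` is recurrent if for every set `B` of positive measure and
every neighbourhood `V` of `1 ∈ A` there is `N ≥ 1` with
`μ(B ∩ T⁻ᴺB ∩ {φ⁽ᴺ⁾ ∈ V}) > 0`. -/
def IsRecurrentCocycle {X A : Type*} [MeasurableSpace X] (μ : Measure X)
    [CommGroup A] [TopologicalSpace A] (T : X → X) (φ : X → A) : Prop :=
  ∀ B : Set X, MeasurableSet B → 0 < μ B → ∀ V ∈ nhds (1 : A),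
    ∃ N : ℕ, 0 < N ∧
      0 < μ (B ∩ (T^[N]) ⁻¹' B ∩ {x | cocycleIterate T φ N x ∈ V})

/-!
If `ψ = φ · f · (f ∘ T)⁻¹`, then `ψ⁽ⁿ⁾(x) = φ⁽ⁿ⁾(x) · f(x) / f(Tⁿx)` by telescoping. Given `B` and
`V`, second countability lets us shrink `B` to a set of positive measure on which `f` takes values
in a single small translate `aU`. Recurrence of `φ` on that set returns points where `φ⁽ᴺ⁾` is
small, and there `f(x) / f(Tᴺx) ∈ U / U` is small as well.
-/

theorem cocycleIterate_mul_div_comp {X A : Type*} [CommGroup A] (T : X → X) (φ f : X → A)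
    (n : ℕ) (x : X) :
    cocycleIterate T (fun y => φ y * (f y / f (T y))) n x =
      cocycleIterate T φ n x * (f x / f (T^[n] x)) := by
  simp only [cocycleIterate, Finset.prod_mul_distrib, ← Function.iterate_succ_apply' T]
  rw [Finset.prod_range_div' (fun i => f (T^[i] x))]
  rfl

theorem MeasureTheory.Measure.QuasiMeasurePreserving.ae_forall_iterate {X : Type*}
    [MeasurableSpace X] {μ : Measure X} {T : X → X} (hT : Measure.QuasiMeasurePreserving T μ μ)
    {p : X → Prop} (hp : ∀ᵐ x ∂μ, p x) : ∀ᵐ x ∂μ, ∀ n, p (T^[n] x) :=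
  ae_all_iff.2 fun n => (hT.iterate n).ae hp

theorem ae_cocycleIterate_eq_of_cohomologous {X A : Type*} [MeasurableSpace X] {μ : Measure X}
    [CommGroup A] {T : X → X} (hT : Measure.QuasiMeasurePreserving T μ μ) {φ ψ f : X → A}
    (hcoh : ∀ᵐ x ∂μ, ψ x = φ x * f x * (f (T x))⁻¹) :
    ∀ᵐ x ∂μ, ∀ n, cocycleIterate T ψ n x = cocycleIterate T φ n x * (f x / f (T^[n] x)) := by
  filter_upwards [hT.ae_forall_iterate hcoh] with x hx n
  rw [← cocycleIterate_mul_div_comp]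
  exact Finset.prod_congr rfl fun i _ => by rw [hx i, mul_assoc, ← div_eq_mul_inv]

theorem exists_open_nhds_one_div_mem {G : Type*} [TopologicalSpace G] [Group G]
    [IsTopologicalGroup G] {s : Set G} (hs : s ∈ 𝓝 1) :
    ∃ U : Set G, IsOpen U ∧ (1 : G) ∈ U ∧ ∀ u ∈ U, ∀ v ∈ U, u / v ∈ s := by
  have : (fun p : G × G => p.1 / p.2) ⁻¹' s ∈ 𝓝 ((1, 1) : G × G) :=
    continuous_div'.continuousAt.preimage_mem_nhds (by rwa [div_one])
  simpa only [Set.prod_subset_iff, Set.mem_preimage] using exists_nhds_square this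

theorem exists_measure_inter_preimage_smul_pos {X G : Type*} [MeasurableSpace X]
    {μ : Measure X} [TopologicalSpace G] [Group G] [ContinuousConstSMul G G]
    [SecondCountableTopology G] (f : X → G) {B : Set X} (hB : μ B ≠ 0) {U : Set G}
    (hU : U ∈ 𝓝 1) : ∃ a : G, 0 < μ (B ∩ f ⁻¹' (a • U)) := by
  obtain ⟨s, hs, hcover⟩ := countable_cover_nhds fun a : G => smul_mem_nhds_self.2 hU
  have : Countable s := hs.to_subtype
  have hB' : B = ⋃ a : s, B ∩ f ⁻¹' ((a : G) • U) := by
    rw [← Set.inter_iUnion, ← Set.preimage_iUnion, Set.iUnion_coe_set, hcover,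
      Set.preimage_univ, Set.inter_univ]
  obtain ⟨a, ha⟩ := exists_measure_pos_of_not_measure_iUnion_null (hB' ▸ hB)
  exact ⟨a, ha⟩

theorem IsRecurrentCocycle.of_ae_cocycleIterate_eq_mul_div {X A : Type*} [MeasurableSpace X]
    {μ : Measure X} [CommGroup A] [TopologicalSpace A] [IsTopologicalGroup A]
    [SecondCountableTopology A] [MeasurableSpace A] [OpensMeasurableSpace A] {T : X → X}
    {φ ψ f : X → A} (hrec : IsRecurrentCocycle μ T φ) (hf : Measurable f)
    (h : ∀ᵐ x ∂μ, ∀ n, cocycleIterate T ψ n x = cocycleIterate T φ n x * (f x / f (T^[n] x))) :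
    IsRecurrentCocycle μ T ψ := by
  intro B hB hBpos V hV
  obtain ⟨W, hW, hWV⟩ := exists_nhds_one_split hV
  obtain ⟨U, hUo, hU1, hUW⟩ := exists_open_nhds_one_div_mem hW
  obtain ⟨a, ha⟩ := exists_measure_inter_preimage_smul_pos f hBpos.ne' (hUo.mem_nhds hU1)
  have hC : MeasurableSet (B ∩ f ⁻¹' (a • U)) := hB.inter (hf (hUo.smul a).measurableSet)
  obtain ⟨N, hN, hpos⟩ := hrec _ hC ha W hW
  refine ⟨N, hN, hpos.trans_le (measure_mono_ae ?_)⟩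
  filter_upwards [h] with x hx
  rintro ⟨⟨⟨hxB, u, hu, hux⟩, hTxB, v, hv, hvx⟩, hxW⟩
  refine ⟨⟨hxB, hTxB⟩, ?_⟩
  change cocycleIterate T ψ N x ∈ V
  dsimp only at hux hvx
  rw [hx N, ← hux, ← hvx, smul_eq_mul, smul_eq_mul, mul_div_mul_left_eq_div]
  exact hWV _ hxW _ (hUW u hu v hv)

theorem recurrent_of_cohomologous_general
    {X A : Type*} [MeasurableSpace X] (μ : Measure X)
    [CommGroup A] [TopologicalSpace A] [IsTopologicalGroup A] [PolishSpace A]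
    [MeasurableSpace A] [BorelSpace A]
    (T : X → X) (hT : MeasurePreserving T μ μ)
    (φ ψ : X → A)
    (f : X → A) (hf : Measurable f)
    (hcoh : ∀ᵐ x ∂μ, ψ x = φ x * f x * (f (T x))⁻¹)
    (hrec : IsRecurrentCocycle μ T φ) :
    IsRecurrentCocycle μ T ψ :=
  hrec.of_ae_cocycleIterate_eq_mul_div hf
    (ae_cocycleIterate_eq_of_cohomologous hT.quasiMeasurePreserving hcoh)

/-- If two cocycles `φ, ψ : X → A` over an ergodic invertible measure-preserving `T`, with
values in an abelian Polish group, are cohomologous (`ψ = φ · f · (f∘T)⁻¹`) and `φ` is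
recurrent, then `ψ` is recurrent. -/
theorem recurrent_of_cohomologous
    {X A : Type*} [MeasurableSpace X] (μ : Measure X) [IsProbabilityMeasure μ]
    [CommGroup A] [TopologicalSpace A] [IsTopologicalGroup A] [PolishSpace A]
    [MeasurableSpace A] [BorelSpace A]
    (T Tinv : X → X) (hT : MeasurePreserving T μ μ) (hTinv : MeasurePreserving Tinv μ μ)
    (hinv₁ : ∀ x, Tinv (T x) = x) (hinv₂ : ∀ x, T (Tinv x) = x)
    (herg : Ergodic T μ)
    (φ ψ : X → A) (hφ : Measurable φ) (hψ : Measurable ψ)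
    (f : X → A) (hf : Measurable f)
    (hcoh : ∀ᵐ x ∂μ, ψ x = φ x * f x * (f (T x))⁻¹)
    (hrec : IsRecurrentCocycle μ T φ) :
    IsRecurrentCocycle μ T ψ :=
  recurrent_of_cohomologous_general μ T hT φ ψ f hf hcoh hrec
end
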